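/- arXiv:1806.02082 — 5 statements merged into one kernel-verified Lean document; each statement's English description precedes it below -/
import Mathlib

section
/- Let m : ℝ → ℝ³ be a smooth map with |m(ξ)| = 1 for all ξ, and suppose m satisfies the traveling-wave Landau–Lifshitz equation c·m' = m × m'' + k² m₃ (m × e₃) − 2λ m × (e₁ × m'), with m(ξ) → (0,0,±1) as ξ → ±∞ and m' → 0 at infinity. Then v² + k² m₃² = k², where v = |m'|; equivalently v = k sin θ with m₃ = cos θ. -/
open Filter Topology

lemma ll_dot_cross (k lam c : ℝ) (a b d : Fin 3 → ℝ)
    (ha : a 0 ^ 2 + a 1 ^ 2 + a 2 ^ 2 = 1)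
    (hab : a 0 * b 0 + a 1 * b 1 + a 2 * b 2 = 0)
    (heq : c • b = crossProduct a d + (k ^ 2 * a 2) • crossProduct a ![(0:ℝ), 0, 1]
        - (2 * lam) • crossProduct a (crossProduct ![(1:ℝ), 0, 0] b)) :
    b 0 * d 0 + b 1 * d 1 + b 2 * d 2 + k ^ 2 * a 2 * b 2 = 0 := by
  have h0 := congrFun heq 0
  have h1 := congrFun heq 1
  have h2 := congrFun heq 2
  simp [cross_apply, Matrix.cons_val_zero, Matrix.cons_val_one] at h0 h1 h2
  linear_combination (a 2*b 1 - a 1*b 2)*h0 + (a 0*b 2 - a 2*b 0)*h1 + (a 1*b 0 - a 0*b 1)*h2 - (b 0*d 0 + b 1*d 1 + b 2*d 2 + k^2*a 2*b 2)*ha + (a 0*d 0 + a 1*d 1 + a 2*d 2 + k^2*a 2*a 2 - 2*lam*(a 2*b 1 - a 1*b 2))*hab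

/-- Projecting the traveling-wave Landau–Lifshitz equation with DMI onto `m × m'`
and integrating with boundary conditions gives `v² + k² m₃² = k²` where `v = |m'|`. -/
theorem conservation_law_traveling_wave
    (k lam c : ℝ) (hk : 0 < k) (m : ℝ → Fin 3 → ℝ)
    (hsmooth : ContDiff ℝ (⊤ : ℕ∞) m)
    (hunit : ∀ ξ, ∑ i, (m ξ i) ^ 2 = 1)
    (heq : ∀ ξ, c • deriv m ξ =
        crossProduct (m ξ) (deriv (deriv m) ξ)
        + (k ^ 2 * m ξ 2) • crossProduct (m ξ) ![(0:ℝ), 0, 1]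
        - (2 * lam) • crossProduct (m ξ) (crossProduct ![(1:ℝ), 0, 0] (deriv m ξ)))
    (hbcP : Tendsto m atTop (𝓝 ![(0:ℝ), 0, 1]))
    (hbcM : Tendsto m atBot (𝓝 ![(0:ℝ), 0, -1]))
    (hbcP' : Tendsto (deriv m) atTop (𝓝 0))
    (hbcM' : Tendsto (deriv m) atBot (𝓝 0)) :
    ∀ ξ, (∑ i, (deriv m ξ i) ^ 2) + k ^ 2 * (m ξ 2) ^ 2 = k ^ 2 := by

  -- differentiability facts
  have hdm : Differentiable ℝ m := hsmooth.differentiable (by simp)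
  have hsm' : ContDiff ℝ (↑(⊤:ℕ∞)) (deriv m) :=
    (contDiff_infty_iff_deriv.mp (hsmooth.of_le (by simp))).2
  have hdm' : Differentiable ℝ (deriv m) := hsm'.differentiable (by simp)
  have hcompM : ∀ ξ i, HasDerivAt (fun x => m x i) (deriv m ξ i) ξ := fun ξ i =>
    (hasDerivAt_pi.mp (hdm ξ).hasDerivAt) i
  have hcompM' : ∀ ξ i, HasDerivAt (fun x => deriv m x i) (deriv (deriv m) ξ i) ξ := fun ξ i =>
    (hasDerivAt_pi.mp (hdm' ξ).hasDerivAt) i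
  -- orthogonality m · m' = 0
  have horth : ∀ ξ, m ξ 0 * deriv m ξ 0 + m ξ 1 * deriv m ξ 1 + m ξ 2 * deriv m ξ 2 = 0 := by
    intro ξ
    have hS : HasDerivAt (fun x => (m x 0)^2 + (m x 1)^2 + (m x 2)^2)
        (2 * m ξ 0 * deriv m ξ 0 + 2 * m ξ 1 * deriv m ξ 1 + 2 * m ξ 2 * deriv m ξ 2) ξ := by
      have h0 := ((hcompM ξ 0).pow 2)
      have h1 := ((hcompM ξ 1).pow 2)
      have h2 := ((hcompM ξ 2).pow 2)
      exact ((h0.add h1).add h2).congr_deriv (by ring)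
    have hEq : (fun x => (m x 0)^2 + (m x 1)^2 + (m x 2)^2) = fun _ => (1:ℝ) := by
      funext x
      have := hunit x
      simpa [Fin.sum_univ_three] using this
    rw [hEq] at hS
    have := hS.unique (hasDerivAt_const ξ 1)
    linarith
  -- the conserved quantity
  set f : ℝ → ℝ := fun ξ => (deriv m ξ 0)^2 + (deriv m ξ 1)^2 + (deriv m ξ 2)^2
      + k ^ 2 * (m ξ 2) ^ 2 with hf
  have hfder : ∀ ξ, HasDerivAt f 0 ξ := by
    intro ξ
    have h0 := ((hcompM' ξ 0).pow 2)
    have h1 := ((hcompM' ξ 1).pow 2)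
    have h2 := ((hcompM' ξ 2).pow 2)
    have h3 := ((hcompM ξ 2).pow 2).const_mul (k^2)
    have key := ll_dot_cross k lam c (m ξ) (deriv m ξ) (deriv (deriv m) ξ)
      (by simpa [Fin.sum_univ_three] using hunit ξ) (horth ξ) (heq ξ)
    have := ((h0.add h1).add h2).add h3
    exact this.congr_deriv (by ring_nf; nlinarith [key])
  have hconst : ∀ x y, f x = f y := by
    intro x y
    exact is_const_of_deriv_eq_zero (fun z => (hfder z).differentiableAt)
      (fun z => (hfder z).deriv) x y
  -- limit at +∞
  have hlim : Tendsto f atTop (𝓝 (k^2)) := by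
    have happ : ∀ i : Fin 3, Tendsto (fun ξ => deriv m ξ i) atTop (𝓝 0) := by
      intro i
      have := ((continuous_apply i).continuousAt (x := (0 : Fin 3 → ℝ))).tendsto.comp hbcP'
      exact this
    have hm2 : Tendsto (fun ξ => m ξ 2) atTop (𝓝 1) := by
      have := ((continuous_apply (2 : Fin 3)).continuousAt
        (x := (![(0:ℝ),0,1]))).tendsto.comp hbcP
      exact this
    have : Tendsto f atTop (𝓝 (0^2 + 0^2 + 0^2 + k^2 * 1^2)) := by
      exact (((((happ 0).pow 2).add ((happ 1).pow 2)).add ((happ 2).pow 2)).add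
        ((hm2.pow 2).const_mul (k^2)))
    simpa using this
  intro ξ
  have hfconst : f = fun _ => f ξ := funext fun x => hconst x ξ
  have : Tendsto f atTop (𝓝 (f ξ)) := by rw [hfconst]; exact tendsto_const_nhds
  have hval : f ξ = k ^ 2 := tendsto_nhds_unique this hlim
  simpa [hf, Fin.sum_univ_three] using hval
end

section
/- For any k > 0, the functions θ(x) with cos θ(x) = ± tanh(k x) given by m = (0, ± sech(k x), ± tanh(k x)) (same sign choice or any combination) satisfy the static Landau–Lifshitz equation 0 = m × (m'' + k² m₃ e₃ − 2λ e₁ × m') for every λ ∈ ℝ; i.e., the Bloch wall is a static solution even in the presence of the Dzyaloshinskii–Moriya term. -/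
/-- The Bloch walls `m = (0, ± sech(kx), ± tanh(kx))` (any combination of signs)
are static solutions of the Landau–Lifshitz equation even with the DMI term. -/
theorem bloch_wall_static
    (k lam : ℝ) (hk : 0 < k) (s₂ s₃ : ℝ)
    (hs₂ : s₂ = 1 ∨ s₂ = -1) (hs₃ : s₃ = 1 ∨ s₃ = -1)
    (m : ℝ → Fin 3 → ℝ)
    (hm : ∀ x, m x = ![0, s₂ * (Real.cosh (k * x))⁻¹, s₃ * Real.tanh (k * x)]) :
    ∀ x, (0 : Fin 3 → ℝ) =
      crossProduct (m x)
        (deriv (deriv m) x + (k ^ 2 * m x 2) • (![(0:ℝ), 0, 1])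
          - (2 * lam) • crossProduct ![(1:ℝ), 0, 0] (deriv m x)) := by
  have hme : m = fun x => ![0, s₂ * (Real.cosh (k * x))⁻¹, s₃ * Real.tanh (k * x)] :=
    funext hm
  subst hme
  have hkx : ∀ x : ℝ, HasDerivAt (fun x : ℝ => k * x) k x := fun x => by
    simpa using (hasDerivAt_id x).const_mul k
  have hcpos : ∀ x : ℝ, (0:ℝ) < Real.cosh (k * x) := fun x => Real.cosh_pos _
  have hcne : ∀ x : ℝ, Real.cosh (k * x) ≠ 0 := fun x => (hcpos x).ne'
  have hc : ∀ x : ℝ, HasDerivAt (fun x => Real.cosh (k * x)) (Real.sinh (k * x) * k) x :=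
    fun x => (hkx x).cosh
  have hs : ∀ x : ℝ, HasDerivAt (fun x => Real.sinh (k * x)) (Real.cosh (k * x) * k) x :=
    fun x => (hkx x).sinh
  -- first derivative
  have hd1 : ∀ x : ℝ, HasDerivAt (fun x => ![0, s₂ * (Real.cosh (k * x))⁻¹,
      s₃ * Real.tanh (k * x)])
      (![0, s₂ * (-(Real.sinh (k * x) * k) / Real.cosh (k * x) ^ 2),
        s₃ * (k / Real.cosh (k * x) ^ 2)]) x := by
    intro x
    rw [hasDerivAt_pi]
    intro i
    fin_cases i
    · simpa using hasDerivAt_const x (0:ℝ)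
    · simpa using (((hc x).inv (hcne x)).const_mul s₂)
    · have ht : HasDerivAt (fun x => Real.tanh (k * x)) (k / Real.cosh (k * x) ^ 2) x := by
        have h := (hs x).div (hc x) (hcne x)
        have heq : (fun x => Real.sinh (k * x) / Real.cosh (k * x)) =
            fun x => Real.tanh (k * x) := by
          funext y; rw [Real.tanh_eq_sinh_div_cosh]
        rw [show ((fun x => Real.sinh (k * x)) / fun x => Real.cosh (k * x)) = fun x => Real.tanh (k * x) from heq] at h
        refine h.congr_deriv ?_
        have hpy := Real.cosh_sq_sub_sinh_sq (k * x)
        field_simp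
        nlinarith [hpy]
      simpa using ht.const_mul s₃
  have hD1 : deriv (fun x => ![0, s₂ * (Real.cosh (k * x))⁻¹, s₃ * Real.tanh (k * x)]) =
      fun x => ![0, s₂ * (-(Real.sinh (k * x) * k) / Real.cosh (k * x) ^ 2),
        s₃ * (k / Real.cosh (k * x) ^ 2)] :=
    funext fun x => (hd1 x).deriv
  rw [hD1]
  -- second derivative
  have hd2 : ∀ x : ℝ, HasDerivAt (fun x => ![0,
      s₂ * (-(Real.sinh (k * x) * k) / Real.cosh (k * x) ^ 2),
      s₃ * (k / Real.cosh (k * x) ^ 2)])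
      (![0, s₂ * (k ^ 2 * (2 * Real.sinh (k * x) ^ 2 - Real.cosh (k * x) ^ 2)
          / Real.cosh (k * x) ^ 3),
        s₃ * (-(2 * k ^ 2 * Real.sinh (k * x)) / Real.cosh (k * x) ^ 3)]) x := by
    intro x
    rw [hasDerivAt_pi]
    intro i
    have hc2 : HasDerivAt (fun x => Real.cosh (k * x) ^ 2)
        (2 * Real.cosh (k * x) * (Real.sinh (k * x) * k)) x := by
      simpa using (hc x).fun_pow 2
    have hc2ne : Real.cosh (k * x) ^ 2 ≠ 0 := pow_ne_zero _ (hcne x)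
    have hpy := Real.cosh_sq_sub_sinh_sq (k * x)
    fin_cases i
    · simpa using hasDerivAt_const x (0:ℝ)
    · have h : HasDerivAt (fun x => s₂ * (-(Real.sinh (k * x) * k) / Real.cosh (k * x) ^ 2))
          (s₂ * (k ^ 2 * (2 * Real.sinh (k * x) ^ 2 - Real.cosh (k * x) ^ 2)
            / Real.cosh (k * x) ^ 3)) x := by
        have h0 := ((((hs x).mul_const k).neg).div hc2 hc2ne).const_mul s₂
        refine h0.congr_deriv ?_
        simp only [Pi.neg_apply]
        field_simp
        ring
      simpa using h
    · have h : HasDerivAt (fun x => s₃ * (k / Real.cosh (k * x) ^ 2))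
          (s₃ * (-(2 * k ^ 2 * Real.sinh (k * x)) / Real.cosh (k * x) ^ 3)) x := by
        have h0 := ((hasDerivAt_const x k).div hc2 hc2ne).const_mul s₃
        refine h0.congr_deriv ?_
        field_simp
        ring
      simpa using h
  have hD2 : deriv (fun x => ![0,
      s₂ * (-(Real.sinh (k * x) * k) / Real.cosh (k * x) ^ 2),
      s₃ * (k / Real.cosh (k * x) ^ 2)]) =
      fun x => ![0, s₂ * (k ^ 2 * (2 * Real.sinh (k * x) ^ 2 - Real.cosh (k * x) ^ 2)
          / Real.cosh (k * x) ^ 3),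
        s₃ * (-(2 * k ^ 2 * Real.sinh (k * x)) / Real.cosh (k * x) ^ 3)] :=
    funext fun x => (hd2 x).deriv
  rw [hD2]
  intro x
  have hpy := Real.cosh_sq_sub_sinh_sq (k * x)
  have hc0 := hcne x
  funext i
  rcases hs₂ with h2 | h2 <;> rcases hs₃ with h3 | h3 <;> subst h2 <;> subst h3 <;>
    fin_cases i <;>
    simp [crossProduct, Real.tanh_eq_sinh_div_cosh] <;>
    field_simp <;>
    first
      | linear_combination (-(2*k^2*Real.sinh (k*x)*Real.cosh (k*x)^9)) * hpy
      | linear_combination (2*k^2*Real.sinh (k*x)*Real.cosh (k*x)^9) * hpy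
      | linear_combination (-(2*k^2*Real.sinh (k*x))) * hpy
      | linear_combination (2*k^2*Real.sinh (k*x)) * hpy
end

section
/- Let 0 < c/2 < λ ≤ (2/π) k and suppose cos ρ = 0 and ρ' = 0 hold simultaneously at a point of a solution of ρ' = 2k tanh(z) sin ρ − 2λ sech(z) cos φ + c. Then e^z ≤ (β + √(1 + β²))/(1 − β) where β = λ/k; i.e., z ≤ z* := ln(β + √(1+β²)) − ln(1 − β). -/
set_option maxHeartbeats 1000000


/-- If `cos ρ = 0` and `ρ' = 0` hold simultaneously at a point of a solution of the
traveling wall equation, then `e^z ≤ (β + √(1+β²))/(1−β)` with `β = λ/k`, i.e.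
`z ≤ z* = ln(β + √(1+β²)) − ln(1−β)`. -/
theorem turning_point_estimate
    (k lam c z ρv φv : ℝ)
    (hc : 0 < c / 2) (hcl : c / 2 < lam) (hlk : lam ≤ (2 / Real.pi) * k)
    (hturn : 0 = 2 * k * Real.tanh z * Real.sin ρv
        - 2 * lam * (Real.cosh z)⁻¹ * Real.cos φv + c)
    (hcos : Real.cos ρv = 0) :
    Real.exp z ≤ (lam / k + Real.sqrt (1 + (lam / k) ^ 2)) / (1 - lam / k) ∧
    z ≤ Real.log (lam / k + Real.sqrt (1 + (lam / k) ^ 2)) - Real.log (1 - lam / k) := by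
  have h2pi : 0 < 2 / Real.pi := by positivity
  have hpi : (2 : ℝ) / Real.pi < 1 := by
    rw [div_lt_one Real.pi_pos]
    linarith [Real.pi_gt_three]
  have hlam : 0 < lam := lt_trans hc hcl
  have hk : 0 < k := by
    by_contra h
    push_neg at h
    have : 2 / Real.pi * k ≤ 0 := mul_nonpos_of_nonneg_of_nonpos h2pi.le h
    linarith
  have hlk' : lam < k := by
    have := mul_lt_mul_of_pos_right hpi hk
    rw [one_mul] at this
    linarith
  have hkl : 0 < k - lam := sub_pos.mpr hlk'
  -- sin ρ = ±1
  have hsin : Real.sin ρv = 1 ∨ Real.sin ρv = -1 := by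
    have h0 := Real.sin_sq_add_cos_sq ρv
    rw [hcos] at h0
    have h1 : (Real.sin ρv - 1) * (Real.sin ρv + 1) = 0 := by nlinarith
    rcases mul_eq_zero.mp h1 with h | h
    · exact Or.inl (by linarith)
    · exact Or.inr (by linarith)
  set x := Real.exp z with hx
  have hxpos : 0 < x := Real.exp_pos z
  have hxinv : Real.exp (-z) = 1 / x := by
    rw [Real.exp_neg]; exact inv_eq_one_div x
  have hcosh : Real.cosh z = (x + 1 / x) / 2 := by
    rw [Real.cosh_eq, hxinv]
  have hsinh : Real.sinh z = (x - 1 / x) / 2 := by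
    rw [Real.sinh_eq, hxinv]
  have hsum : 0 < x + 1 / x := by positivity
  rw [Real.tanh_eq_sinh_div_cosh, hsinh, hcosh] at hturn
  have hcosφ1 : Real.cos φv ≤ 1 := Real.cos_le_one φv
  have hcosφ2 : -1 ≤ Real.cos φv := Real.neg_one_le_cos φv
  -- polynomial form of the turning equation
  have heq : k * Real.sin ρv * (x ^ 2 - 1) - 2 * lam * Real.cos φv * x
      + c / 2 * (x ^ 2 + 1) = 0 := by
    field_simp at hturn
    nlinarith [hturn, sq_nonneg x]
  -- key quadratic inequality
  have hquad : (k - lam) * x ^ 2 ≤ 2 * lam * x + (k + lam) := by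
    rcases hsin with h | h <;> rw [h] at heq
    · nlinarith [mul_nonneg (mul_nonneg hlam.le (by linarith : (0:ℝ) ≤ 1 - Real.cos φv)) hxpos.le,
        sq_nonneg x, mul_pos hlam hxpos]
    · nlinarith [mul_nonneg (mul_nonneg hlam.le (by linarith : (0:ℝ) ≤ 1 + Real.cos φv)) hxpos.le,
        sq_nonneg x, mul_nonneg (by linarith : (0:ℝ) ≤ lam - c / 2) (sq_nonneg x)]
  -- hence x ≤ (k + lam)/(k - lam)
  have hxb : x ≤ (k + lam) / (k - lam) := by
    have hfac : ((k - lam) * x - (k + lam)) * (x + 1) ≤ 0 := by nlinarith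
    have h1 : (k - lam) * x - (k + lam) ≤ 0 := by
      by_contra h
      push_neg at h
      nlinarith
    rw [le_div_iff₀ hkl]
    linarith
  have hsqge : k ≤ Real.sqrt (k ^ 2 + lam ^ 2) := by
    nlinarith [Real.sq_sqrt (show (0:ℝ) ≤ k ^ 2 + lam ^ 2 by positivity),
      Real.sqrt_nonneg (k ^ 2 + lam ^ 2), sq_nonneg (Real.sqrt (k ^ 2 + lam ^ 2) - k),
      sq_nonneg lam]
  have hsq : Real.sqrt (1 + (lam / k) ^ 2) = Real.sqrt (k ^ 2 + lam ^ 2) / k := by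
    have h1 : 1 + (lam / k) ^ 2 = (k ^ 2 + lam ^ 2) / k ^ 2 := by
      field_simp
    rw [h1, Real.sqrt_div (by positivity), Real.sqrt_sq hk.le]
  have hB : 0 < 1 - lam / k := by
    rw [sub_pos, div_lt_one hk]; exact hlk'
  have hEq : (lam / k + Real.sqrt (1 + (lam / k) ^ 2)) / (1 - lam / k)
      = (lam + Real.sqrt (k ^ 2 + lam ^ 2)) / (k - lam) := by
    rw [hsq]
    rw [div_eq_div_iff hB.ne' hkl.ne']
    field_simp
  have hmain : x ≤ (lam / k + Real.sqrt (1 + (lam / k) ^ 2)) / (1 - lam / k) := by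
    rw [hEq]
    refine le_trans hxb ?_
    rw [div_le_div_iff₀ hkl hkl]
    nlinarith
  refine ⟨hmain, ?_⟩
  have hA : 0 < lam / k + Real.sqrt (1 + (lam / k) ^ 2) := by
    have h2 : 0 < Real.sqrt (1 + (lam / k) ^ 2) := Real.sqrt_pos.mpr (by positivity)
    positivity
  rw [← Real.log_div (ne_of_gt hA) (ne_of_gt hB)]
  rw [← Real.exp_le_exp, Real.exp_log (by positivity)]
  exact hmain
end

section
/- Define f(β) = β (sinh(2z*) + 2 S(z*) cosh²(z*)) where z* = ln(β + √(1+β²)) − ln(1 − β) and S(z) = ∫₀^z sech³(η) dη. Let 0 < c/2 < λ ≤ (2/π)k and β = λ/k with f(β) < 1. Then along any solution of the traveling wall system with ρ(0) = z(0) = 0, while 0 ≤ z ≤ z* one has |sin ρ| ≤ f(β) < 1, so cos ρ ≠ 0 on [0, z*]. -/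
open MeasureTheory

private lemma sech3_cont : Continuous (fun η : ℝ => ((Real.cosh η)⁻¹) ^ 3) := by
  exact (Real.continuous_cosh.inv₀ (fun x => (Real.cosh_pos x).ne')).pow 3

private lemma sech3_nonneg (η : ℝ) : 0 ≤ ((Real.cosh η)⁻¹) ^ 3 := by
  positivity

set_option maxHeartbeats 1600000 in
/-- Let `f(β) = β (sinh 2z* + 2 S(z*) cosh² z*)` with
`z* = ln(β + √(1+β²)) − ln(1−β)` and `S(z) = ∫₀^z sech³`. Under the parameter
ordering and `f(β) < 1`, along any solution with `ρ(0) = z(0) = 0` one has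
`|sin ρ| ≤ f(β) < 1` for `0 ≤ z ≤ z*`, so `cos ρ ≠ 0` there. -/
theorem no_turning_before_zstar
    (k lam c : ℝ) (ρ φ : ℝ → ℝ)
    (hc : 0 < c / 2) (hcl : c / 2 < lam) (hlk : lam ≤ (2 / Real.pi) * k)
    (zstar : ℝ)
    (hzstar : zstar = Real.log (lam / k + Real.sqrt (1 + (lam / k) ^ 2))
        - Real.log (1 - lam / k))
    (f : ℝ → ℝ)
    (hf : ∀ β : ℝ, f β = β * (Real.sinh (2 * zstar)
        + 2 * (∫ η in (0:ℝ)..zstar, ((Real.cosh η)⁻¹) ^ 3) * Real.cosh zstar ^ 2))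
    (hsmall : f (lam / k) < 1)
    (hsol : ∀ z : ℝ, k * Real.sin (ρ z) =
        (c / 2) * Real.sinh (2 * z)
          - 2 * lam * Real.cosh z ^ 2 *
              ∫ η in (0:ℝ)..z, ((Real.cosh η)⁻¹) ^ 3 * Real.cos (φ η))
    (hρ0 : ρ 0 = 0) :
    ∀ z : ℝ, 0 ≤ z → z ≤ zstar →
      |Real.sin (ρ z)| ≤ f (lam / k) ∧ Real.cos (ρ z) ≠ 0 := by
  have hlam : 0 < lam := lt_trans hc hcl
  have hk : 0 < k := by
    by_contra hk
    push_neg at hk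
    have : (2 / Real.pi) * k ≤ 0 :=
      mul_nonpos_of_nonneg_of_nonpos (by positivity) hk
    linarith
  intro z hz hzz
  have hzs : 0 ≤ zstar := le_trans hz hzz
  -- integrability of sech³ on any interval
  have hint : ∀ a b : ℝ, IntervalIntegrable (fun η : ℝ => ((Real.cosh η)⁻¹) ^ 3)
      volume a b := fun a b => sech3_cont.intervalIntegrable a b
  set S : ℝ → ℝ := fun t => ∫ η in (0:ℝ)..t, ((Real.cosh η)⁻¹) ^ 3 with hS
  have hSz_nonneg : 0 ≤ S z :=
    intervalIntegral.integral_nonneg hz (fun η _ => sech3_nonneg η)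
  have hSmono : S z ≤ S zstar := by
    have hadd := intervalIntegral.integral_add_adjacent_intervals
      (hint 0 z) (hint z zstar)
    have h2 : 0 ≤ ∫ η in z..zstar, ((Real.cosh η)⁻¹) ^ 3 :=
      intervalIntegral.integral_nonneg hzz (fun η _ => sech3_nonneg η)
    simp only [hS]
    linarith [hadd]
  -- bound the integral with cos φ
  have hintbound : |∫ η in (0:ℝ)..z, ((Real.cosh η)⁻¹) ^ 3 * Real.cos (φ η)| ≤ S z := by
    by_cases hg : IntervalIntegrable
        (fun η : ℝ => ((Real.cosh η)⁻¹) ^ 3 * Real.cos (φ η)) volume 0 z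
    · calc |∫ η in (0:ℝ)..z, ((Real.cosh η)⁻¹) ^ 3 * Real.cos (φ η)|
          ≤ ∫ η in (0:ℝ)..z, |((Real.cosh η)⁻¹) ^ 3 * Real.cos (φ η)| := by
            simpa only [Real.norm_eq_abs] using
              intervalIntegral.norm_integral_le_integral_norm
              (f := fun η : ℝ => ((Real.cosh η)⁻¹) ^ 3 * Real.cos (φ η)) hz
        _ ≤ S z := by
            refine intervalIntegral.integral_mono_on hz hg.abs (hint 0 z) ?_
            intro η _
            rw [abs_mul, abs_of_nonneg (sech3_nonneg η)]
            nlinarith [Real.abs_cos_le_one (φ η), sech3_nonneg η,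
              abs_nonneg (Real.cos (φ η))]
    · rw [intervalIntegral.integral_undef hg]
      simpa using hSz_nonneg
  -- main bound
  have hsinh : 0 ≤ Real.sinh (2 * z) := by rw [← Real.sinh_zero]; exact Real.sinh_le_sinh.2 (by linarith)
  have hsinhmono : Real.sinh (2 * z) ≤ Real.sinh (2 * zstar) :=
    Real.sinh_le_sinh.2 (by linarith)
  have hcoshmono : Real.cosh z ≤ Real.cosh zstar :=
    Real.cosh_le_cosh.2 (by rw [abs_of_nonneg hz, abs_of_nonneg hzs]; exact hzz)
  have hcoshpos : 0 < Real.cosh z := Real.cosh_pos z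
  have hcosh2 : Real.cosh z ^ 2 ≤ Real.cosh zstar ^ 2 := by
    nlinarith
  have hkey : k * |Real.sin (ρ z)| ≤
      lam * (Real.sinh (2 * zstar) + 2 * S zstar * Real.cosh zstar ^ 2) := by
    have h1 := hsol z
    have habs : |k * Real.sin (ρ z)| ≤
        (c / 2) * Real.sinh (2 * z) + 2 * lam * Real.cosh z ^ 2 * S z := by
      rw [h1]
      refine le_trans (abs_sub _ _) ?_
      have h2 : |(c / 2) * Real.sinh (2 * z)| = (c / 2) * Real.sinh (2 * z) := by
        rw [abs_of_nonneg]; positivity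
      have h3 : |2 * lam * Real.cosh z ^ 2 *
          ∫ η in (0:ℝ)..z, ((Real.cosh η)⁻¹) ^ 3 * Real.cos (φ η)| ≤
          2 * lam * Real.cosh z ^ 2 * S z := by
        rw [abs_mul]
        have hpos : 0 ≤ 2 * lam * Real.cosh z ^ 2 := by positivity
        rw [abs_of_nonneg hpos]
        exact mul_le_mul_of_nonneg_left hintbound hpos
      linarith
    rw [abs_mul, abs_of_pos hk] at habs
    have hstep : (c / 2) * Real.sinh (2 * z) + 2 * lam * Real.cosh z ^ 2 * S z ≤
        lam * (Real.sinh (2 * zstar) + 2 * S zstar * Real.cosh zstar ^ 2) := by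
      have e1 : (c / 2) * Real.sinh (2 * z) ≤ lam * Real.sinh (2 * zstar) := by
        nlinarith
      have e2 : 2 * lam * Real.cosh z ^ 2 * S z ≤
          2 * lam * Real.cosh zstar ^ 2 * S zstar := by
        have hzs2 : 0 ≤ Real.cosh zstar ^ 2 := by positivity
        have hmm := mul_le_mul hcosh2 hSmono hSz_nonneg hzs2
        nlinarith
      nlinarith
    linarith
  have hSdef : S zstar = ∫ η in (0:ℝ)..zstar, ((Real.cosh η)⁻¹) ^ 3 := rfl
  have hbound : |Real.sin (ρ z)| ≤ f (lam / k) := by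
    have hfeq : f (lam / k) = lam * (Real.sinh (2 * zstar)
        + 2 * (∫ η in (0:ℝ)..zstar, ((Real.cosh η)⁻¹) ^ 3)
          * Real.cosh zstar ^ 2) / k := by
      rw [hf]; ring
    rw [hfeq, le_div_iff₀ hk, ← hSdef, mul_comm]
    exact hkey
  refine ⟨hbound, ?_⟩
  intro hcos
  have h1 : Real.sin (ρ z) ^ 2 = 1 := by
    have := Real.sin_sq_add_cos_sq (ρ z)
    rw [hcos] at this; norm_num at this
    rcases this with h | h <;> rw [h] <;> norm_num
  nlinarith [hbound, hsmall, h1, abs_nonneg (Real.sin (ρ z)),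
    sq_abs (Real.sin (ρ z))]
end

section
/- Any solution of the planar system ρ' = 2k sin ρ cos θ + c, θ' = −k sin θ cos ρ (the λ = 0 traveling wave system) conserves the quantity α = sin ρ sin²θ − (c/k) cos θ. -/
/-- The nonchiral (`λ = 0`) traveling wave system conserves
`α = sin ρ sin²θ − (c/k) cos θ`. -/
theorem nonchiral_first_integral
    (k c : ℝ) (hk : 0 < k) (ρ θ : ℝ → ℝ)
    (hρ : ∀ ξ, HasDerivAt ρ (2 * k * Real.sin (ρ ξ) * Real.cos (θ ξ) + c) ξ)
    (hθ : ∀ ξ, HasDerivAt θ (-k * Real.sin (θ ξ) * Real.cos (ρ ξ)) ξ) :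
    ∀ ξ₁ ξ₂ : ℝ,
      Real.sin (ρ ξ₁) * Real.sin (θ ξ₁) ^ 2 - (c / k) * Real.cos (θ ξ₁)
        = Real.sin (ρ ξ₂) * Real.sin (θ ξ₂) ^ 2 - (c / k) * Real.cos (θ ξ₂) := by
  set F : ℝ → ℝ := fun ξ =>
    Real.sin (ρ ξ) * Real.sin (θ ξ) ^ 2 - (c / k) * Real.cos (θ ξ) with hF
  have key : ∀ ξ, HasDerivAt F 0 ξ := by
    intro ξ
    have h1 : HasDerivAt (fun ξ => Real.sin (ρ ξ))
        (Real.cos (ρ ξ) * (2 * k * Real.sin (ρ ξ) * Real.cos (θ ξ) + c)) ξ :=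
      (Real.hasDerivAt_sin (ρ ξ)).comp ξ (hρ ξ)
    have h2 : HasDerivAt (fun ξ => Real.sin (θ ξ))
        (Real.cos (θ ξ) * (-k * Real.sin (θ ξ) * Real.cos (ρ ξ))) ξ :=
      (Real.hasDerivAt_sin (θ ξ)).comp ξ (hθ ξ)
    have h3 : HasDerivAt (fun ξ => Real.cos (θ ξ))
        (-Real.sin (θ ξ) * (-k * Real.sin (θ ξ) * Real.cos (ρ ξ))) ξ :=
      (Real.hasDerivAt_cos (θ ξ)).comp ξ (hθ ξ)
    have h4 := (h1.mul (h2.pow 2)).sub (h3.const_mul (c / k))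
    have hne : k ≠ 0 := ne_of_gt hk
    convert h4 using 1
    · rfl
    · rfl
    · rfl
    simp only [Pi.pow_apply]
    field_simp
    ring
  have hdiff : Differentiable ℝ F := fun ξ => (key ξ).differentiableAt
  have hderiv : ∀ ξ, deriv F ξ = 0 := fun ξ => (key ξ).deriv
  intro ξ₁ ξ₂
  exact is_const_of_deriv_eq_zero hdiff hderiv ξ₁ ξ₂
end
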